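/- For every integer b > 1 there exist a finite alphabet A and a stochastic matrix M on A with the following two properties: (1) for the broadcast process with channel M on the 2-level b-ary tree (a root, its b children, and the b² grandchildren, which are the leaves), for every initial distribution of the root value σ_ρ, the random variables σ_ρ and σ_∂ (the configuration at the b² leaves) are independent; (2) there exists an integer B such that the reconstruction problem for the infinite B-ary tree T_B and M is solvable. -/

import Mathlib

open Filter

/-- The distribution of the configuration at level `n` of the `b`-ary tree,
for the broadcast process with channel `M`, given that the root has value `i`.
Vertices at level `n` are encoded as paths `Fin n → Fin b`. -/
noncomputable def levelDist {A : Type} [Fintype A] [DecidableEq A]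
    (M : A → A → ℝ) (b : ℕ) (i : A) : (n : ℕ) → ((Fin n → Fin b) → A) → ℝ
  | 0 => fun σ => if σ = (fun _ => i) then 1 else 0
  | n + 1 => fun τ => ∑ σ : (Fin n → Fin b) → A, levelDist M b i n σ *
      ∏ w : Fin (n + 1) → Fin b, M (σ fun m => w m.castSucc) (τ w)

/-- Total variation distance between two (densities of) probability measures
on a finite set. -/
noncomputable def tvDist {Ω : Type*} [Fintype Ω] (P Q : Ω → ℝ) : ℝ :=
  (1 / 2) * ∑ σ, |P σ - Q σ|

/-!
Take the letters to be the subsets `t` of `Fin N`, `N = b + 1`, and let the channel draw `t`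
uniformly and then tilt it by its parity `(-1) ^ #t` with strength `1/2 - #s/N`.

Every entry of the channel from `a` is affine in `#a`, so a product of at most `b < N` of them is a
polynomial of degree `< N` in `#a`, and such polynomials are orthogonal to `(-1) ^ #a` (an `N`-th
finite difference). Since the rows of the channel differ only by multiples of the parity, the law
of the grandchildren below each child does not depend on the root: this is (1).

For (2), the mean parity of a child of `s` is `1/2 - #s/N`; it determines `#s`, hence the parity
of `s`. With `B = 128 N³` children, every vertex guesses `#s` from the sum of the parities its
children guessed; Chebyshev's inequality and induction on the depth show that the guess at the
root is right with probability at least `1 - 1/(8N)`, so the total variation distance between the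
roots `∅` and `univ` stays above `1 - 1/(4N)`.
-/

open Finset Polynomial

section FiniteSums

variable {ι α β : Type*} [Fintype ι] [DecidableEq ι] [Fintype α] [Fintype β] [DecidableEq β]

lemma sum_prod_apply_eq_one {K : ι → α → ℝ} (hK : ∀ w, ∑ a, K w a = 1) :
    ∑ τ : ι → α, ∏ w, K w (τ w) = 1 := by
  simp [← Fintype.prod_sum, hK]

lemma sum_filter_sum_fiber (h : α → β) (w : α → ℝ) (P : β → Prop) [DecidablePred P] :
    ∑ y ∈ univ.filter P, ∑ x ∈ univ.filter (fun x => h x = y), w x =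
      ∑ x ∈ univ.filter (fun x => P (h x)), w x := by
  rw [sum_filter, sum_filter, ← sum_fiberwise univ h]
  refine sum_congr rfl fun y _ => ?_
  split_ifs with hy
  · exact sum_congr rfl fun x hx => by rw [(mem_filter.1 hx).2, if_pos hy]
  · exact (sum_eq_zero fun x hx => by rw [(mem_filter.1 hx).2, if_neg hy]).symm

omit [Fintype β] in
/-- The coordinatewise image of an i.i.d. family is i.i.d. with the image law. -/
lemma prod_sum_fiber (p : α → ℝ) (h : α → β) (y : ι → β) :
    ∏ m, ∑ x ∈ univ.filter (fun x => h x = y m), p x =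
      ∑ g ∈ univ.filter (fun g : ι → α => (fun m => h (g m)) = y), ∏ m, p (g m) := by
  rw [prod_univ_sum]
  congr 1
  ext g
  simp [Fintype.mem_piFinset, funext_iff]

lemma sum_prod_mul_sum_sq {R f : α → ℝ} (hR : ∑ a, R a = 1) (hf : ∑ a, R a * f a = 0) :
    ∑ y : ι → α, (∏ k, R (y k)) * (∑ m, f (y m)) ^ 2 =
      Fintype.card ι * ∑ a, R a * f a ^ 2 := by
  have pair : ∀ m m', ∑ y : ι → α, (∏ k, R (y k)) * (f (y m) * f (y m')) =
      if m = m' then ∑ a, R a * f a ^ 2 else 0 := by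
    intro m m'
    have hprod : ∀ y : ι → α, (∏ k, R (y k)) * (f (y m) * f (y m')) =
        ∏ k, R (y k) * ((if k = m then f (y k) else 1) * (if k = m' then f (y k) else 1)) := by
      intro y
      rw [prod_mul_distrib, prod_mul_distrib, Fintype.prod_ite_eq', Fintype.prod_ite_eq']
    simp_rw [hprod]
    rw [← Fintype.prod_sum fun k a =>
      R a * ((if k = m then f a else 1) * (if k = m' then f a else 1))]
    split_ifs with h
    · subst h
      rw [prod_eq_single m (fun k _ hk => by simp [hk, hR]) (by simp)]
      simp [sq]
    · exact prod_eq_zero (mem_univ m) (by simp [h, hf])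
  have hsq : ∀ y : ι → α, (∑ m, f (y m)) ^ 2 = ∑ m, ∑ m', f (y m) * f (y m') :=
    fun y => by rw [sq, sum_mul_sum]
  simp_rw [hsq, mul_sum]
  rw [sum_comm]
  simp_rw [sum_comm (s := univ (α := ι → α)), pair, sum_ite_eq, if_pos (mem_univ _), sum_const,
    card_univ, nsmul_eq_mul, mul_sum]

lemma sum_le_sum_mul_sq_div {p X : α → ℝ} (hp : ∀ x, 0 ≤ p x) (s : Finset α) {θ : ℝ}
    (hθ : 0 < θ) (hs : ∀ x ∈ s, θ ≤ |X x|) : ∑ x ∈ s, p x ≤ (∑ x, p x * X x ^ 2) / θ ^ 2 := by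
  rw [le_div_iff₀ (by positivity), sum_mul]
  calc ∑ x ∈ s, p x * θ ^ 2 ≤ ∑ x ∈ s, p x * X x ^ 2 := by
        refine sum_le_sum fun x hx => mul_le_mul_of_nonneg_left ?_ (hp x)
        exact (pow_le_pow_left₀ hθ.le (hs x hx) 2).trans_eq (sq_abs _)
    _ ≤ ∑ x, p x * X x ^ 2 :=
        sum_le_sum_of_subset_of_nonneg (subset_univ s) fun x _ _ => mul_nonneg (hp x) (sq_nonneg _)

end FiniteSums

section TotalVariation

variable {α β : Type*} [Fintype α] [Fintype β]

lemma tvDist_nonneg (P Q : α → ℝ) : 0 ≤ tvDist P Q :=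
  mul_nonneg (by norm_num) (sum_nonneg fun _ _ => abs_nonneg _)

lemma tvDist_comp_equiv (e : β ≃ α) (P Q : α → ℝ) :
    tvDist (fun x => P (e x)) (fun x => Q (e x)) = tvDist P Q := by
  simp only [tvDist, e.sum_comp fun σ => |P σ - Q σ|]

lemma tvDist_sum_mul_le {K : α → β → ℝ} (hK0 : ∀ σ τ, 0 ≤ K σ τ) (hK1 : ∀ σ, ∑ τ, K σ τ = 1)
    (P Q : α → ℝ) :
    tvDist (fun τ => ∑ σ, P σ * K σ τ) (fun τ => ∑ σ, Q σ * K σ τ) ≤ tvDist P Q := by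
  refine mul_le_mul_of_nonneg_left ?_ (by norm_num)
  calc ∑ τ, |∑ σ, P σ * K σ τ - ∑ σ, Q σ * K σ τ|
      ≤ ∑ τ, ∑ σ, |P σ - Q σ| * K σ τ := by
        refine sum_le_sum fun τ _ => ?_
        rw [← sum_sub_distrib]
        refine (abs_sum_le_sum_abs _ _).trans_eq (sum_congr rfl fun σ _ => ?_)
        rw [← sub_mul, abs_mul, abs_of_nonneg (hK0 σ τ)]
    _ = ∑ σ, |P σ - Q σ| := by
        rw [sum_comm]
        simp_rw [← mul_sum, hK1, mul_one]

lemma sum_sub_sum_le_tvDist {P Q : α → ℝ} (h : ∑ σ, P σ = ∑ σ, Q σ) (s : Finset α) :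
    ∑ σ ∈ s, P σ - ∑ σ ∈ s, Q σ ≤ tvDist P Q := by
  classical
  have htotal : ∑ σ ∈ s, (P σ - Q σ) + ∑ σ ∈ sᶜ, (P σ - Q σ) = 0 := by
    rw [sum_add_sum_compl, sum_sub_distrib, h, sub_self]
  have hs := (le_abs_self _).trans (abs_sum_le_sum_abs (fun σ => P σ - Q σ) s)
  have hsc := (neg_le_abs _).trans (abs_sum_le_sum_abs (fun σ => P σ - Q σ) sᶜ)
  rw [tvDist, ← sum_add_sum_compl s fun σ => |P σ - Q σ|, ← sum_sub_distrib]
  linarith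

end TotalVariation

section Paths

variable {b : ℕ}

lemma prod_paths_succ {n : ℕ} (f : (Fin (n + 1) → Fin b) → ℝ) :
    ∏ w, f w = ∏ m, ∏ w, f (Fin.cons m w) := by
  rw [← Fintype.prod_prod_type']
  exact (Fintype.prod_equiv (Fin.consEquiv fun _ => Fin b) _ _ fun _ => rfl).symm

lemma sum_configs_succ {A : Type} [Fintype A] {n : ℕ} (f : ((Fin (n + 1) → Fin b) → A) → ℝ) :
    ∑ σ, f σ = ∑ g : Fin b → (Fin n → Fin b) → A, f fun w => g (w 0) (Fin.tail w) :=
  (Equiv.sum_comp ((Equiv.curry _ _ _).symm.trans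
    ((Fin.consEquiv fun _ => Fin b).arrowCongr (Equiv.refl A))) f).symm

end Paths

section LevelDist

variable {A : Type} [Fintype A] [DecidableEq A] {M : A → A → ℝ} {b : ℕ}

lemma levelDist_nonneg (hM : ∀ i j, 0 ≤ M i j) (i : A) :
    ∀ n σ, 0 ≤ levelDist M b i n σ
  | 0, _ => by simp only [levelDist]; positivity
  | n + 1, _ => sum_nonneg fun σ _ =>
      mul_nonneg (levelDist_nonneg hM i n σ) (prod_nonneg fun _ _ => hM _ _)

lemma sum_levelDist (hM : ∀ i, ∑ j, M i j = 1) (i : A) :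
    ∀ n, ∑ σ, levelDist M b i n σ = 1
  | 0 => by simp [levelDist]
  | n + 1 => by
    simp only [levelDist]
    rw [sum_comm]
    simp_rw [← mul_sum, sum_prod_apply_eq_one fun _ => hM _, mul_one]
    exact sum_levelDist hM i n

lemma levelDist_one (i : A) (τ : (Fin 1 → Fin b) → A) :
    levelDist M b i 1 τ = ∏ w, M i (τ w) := by
  simp [levelDist, Subsingleton.elim _ (Fin.elim0 : Fin 0 → Fin b)]

/-- Given the root, the subtrees of its children are independent copies of the process. -/
lemma levelDist_succ_eq_prod (n : ℕ) (i : A) (τ : (Fin (n + 1) → Fin b) → A) :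
    levelDist M b i (n + 1) τ =
      ∏ m, ∑ a, M i a * levelDist M b a n fun w => τ (Fin.cons m w) := by
  induction n generalizing i with
  | zero =>
    rw [levelDist_one, prod_paths_succ]
    refine prod_congr rfl fun m _ => ?_
    simp [levelDist, funext_iff, Subsingleton.elim _ (Fin.elim0 : Fin 0 → Fin b), eq_comm]
  | succ n ih =>
    have parent_cons (m : Fin b) (w : Fin (n + 1) → Fin b) :
        (fun k => (Fin.cons m w : Fin (n + 2) → Fin b) k.castSucc) =
          Fin.cons m fun k => w k.castSucc := by
      funext k
      cases k using Fin.cases <;> rfl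
    calc levelDist M b i (n + 2) τ
        = ∑ σ : (Fin (n + 1) → Fin b) → A, ∏ m,
            (∑ a, M i a * levelDist M b a n fun w => σ (Fin.cons m w)) *
              ∏ w, M (σ (Fin.cons m fun k => w k.castSucc)) (τ (Fin.cons m w)) := by
          rw [levelDist.eq_2]
          refine sum_congr rfl fun σ _ => ?_
          rw [ih, prod_paths_succ, ← prod_mul_distrib]
          simp only [parent_cons]
      _ = ∏ m, ∑ ρ : (Fin n → Fin b) → A, (∑ a, M i a * levelDist M b a n ρ) *
            ∏ w, M (ρ fun k => w k.castSucc) (τ (Fin.cons m w)) := by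
          rw [sum_configs_succ, Fintype.prod_sum]
          simp only [Fin.cons_zero, Fin.tail_cons]
      _ = _ := by
          refine prod_congr rfl fun m _ => ?_
          simp_rw [sum_mul, mul_assoc]
          rw [sum_comm]
          simp_rw [← mul_sum]
          rfl

variable (M) in
lemma levelDist_relabel {A' : Type} [Fintype A'] [DecidableEq A'] (e : A ≃ A') (i : A') (n : ℕ)
    (σ : (Fin n → Fin b) → A') :
    levelDist (fun x y => M (e.symm x) (e.symm y)) b i n σ =
      levelDist M b (e.symm i) n fun w => e.symm (σ w) := by
  induction n with
  | zero => simp [levelDist, funext_iff]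
  | succ n ih =>
    simp only [levelDist.eq_2, ih]
    exact Fintype.sum_equiv ((Equiv.refl _).arrowCongr e.symm) _ _ fun _ => rfl

lemma levelDist_two_eq_of_sum_sub_mul_levelDist_one
    (hker : ∀ i i' ρ, ∑ a, (M i a - M i' a) * levelDist M b a 1 ρ = 0)
    (i i' : A) (σ : (Fin 2 → Fin b) → A) : levelDist M b i 2 σ = levelDist M b i' 2 σ := by
  rw [levelDist_succ_eq_prod, levelDist_succ_eq_prod]
  refine prod_congr rfl fun m _ => ?_
  rw [← sub_eq_zero, ← sum_sub_distrib]
  simp_rw [← sub_mul]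
  exact hker i i' _

variable (M) in
lemma tvDist_levelDist_relabel {A' : Type} [Fintype A'] [DecidableEq A'] (e : A ≃ A') (B : ℕ)
    (i j : A') (n : ℕ) :
    tvDist (levelDist (fun x y => M (e.symm x) (e.symm y)) B i n)
        (levelDist (fun x y => M (e.symm x) (e.symm y)) B j n) =
      tvDist (levelDist M B (e.symm i) n) (levelDist M B (e.symm j) n) := by
  simp only [funext (levelDist_relabel M e _ n)]
  exact tvDist_comp_equiv ((Equiv.refl _).arrowCongr e.symm) _ _

lemma tvDist_levelDist_succ_le (hM0 : ∀ i j, 0 ≤ M i j) (hM1 : ∀ i, ∑ j, M i j = 1) (B : ℕ)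
    (i j : A) (n : ℕ) :
    tvDist (levelDist M B i (n + 1)) (levelDist M B j (n + 1)) ≤
      tvDist (levelDist M B i n) (levelDist M B j n) := by
  rw [levelDist.eq_2, levelDist.eq_2]
  have hdp := tvDist_sum_mul_le
    (K := fun (σ : (Fin n → Fin B) → A) (τ : (Fin (n + 1) → Fin B) → A) =>
      ∏ w, M (σ fun m => w m.castSucc) (τ w))
    (fun _ _ => prod_nonneg fun _ _ => hM0 _ _) (fun _ => sum_prod_apply_eq_one fun _ => hM1 _)
    (levelDist M B i n) (levelDist M B j n)
  exact hdp

end LevelDist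

section Reconstruction

variable {A : Type} [Fintype A]

def rowMean (M : A → A → ℝ) (χ : A → ℝ) (i : A) : ℝ := ∑ a, M i a * χ a

structure SeparatingStatistic (M : A → A → ℝ) (χ : A → ℝ) (δ : ℝ) : Prop where
  nonneg : ∀ i j, 0 ≤ M i j
  sum_eq_one : ∀ i, ∑ j, M i j = 1
  abs_le_one : ∀ a, |χ a| ≤ 1
  eq_of_rowMean_eq : ∀ a c, rowMean M χ a = rowMean M χ c → χ a = χ c
  le_abs_rowMean_sub : ∀ a c, rowMean M χ a ≠ rowMean M χ c → δ ≤ |rowMean M χ a - rowMean M χ c|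

variable {M : A → A → ℝ} {χ : A → ℝ} {δ : ℝ}

lemma abs_rowMean_le_one (h : SeparatingStatistic M χ δ) (i : A) : |rowMean M χ i| ≤ 1 :=
  calc |rowMean M χ i| ≤ ∑ a, |M i a * χ a| := abs_sum_le_sum_abs _ _
    _ ≤ ∑ a, M i a := sum_le_sum fun a _ => by
        rw [abs_mul, abs_of_nonneg (h.nonneg i a)]
        exact mul_le_of_le_one_right (h.nonneg i a) (h.abs_le_one a)
    _ = 1 := h.sum_eq_one i

lemma abs_sum_mul_sub_le (h : SeparatingStatistic M χ δ) {q : A → ℝ} (hq0 : ∀ a, 0 ≤ q a)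
    (hq1 : ∑ a, q a = 1) (c : A) :
    |∑ a, q a * χ a - χ c| ≤
      2 * ∑ a ∈ univ.filter (fun a => rowMean M χ a ≠ rowMean M χ c), q a := by
  have hsplit : ∑ a, q a * χ a - χ c = ∑ a, q a * (χ a - χ c) := by
    simp [mul_sub, sum_sub_distrib, ← sum_mul, hq1]
  rw [hsplit, mul_sum, sum_filter]
  refine (abs_sum_le_sum_abs _ _).trans (sum_le_sum fun a _ => ?_)
  rw [abs_mul, abs_of_nonneg (hq0 a)]
  split_ifs with ha
  · have := abs_sub (χ a) (χ c)
    nlinarith [h.abs_le_one a, h.abs_le_one c, hq0 a]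
  · rw [h.eq_of_rowMean_eq a c (not_not.1 ha), sub_self, abs_zero, mul_zero]

lemma sum_mul_sub_sq_le_one (h : SeparatingStatistic M χ δ) {R : A → ℝ} (hR0 : ∀ a, 0 ≤ R a)
    (hR1 : ∑ a, R a = 1) : ∑ a, R a * (χ a - ∑ c, R c * χ c) ^ 2 ≤ 1 := by
  set μ := ∑ c, R c * χ c
  have hχ2 : ∑ a, R a * χ a ^ 2 ≤ 1 := hR1 ▸ sum_le_sum fun a _ =>
    mul_le_of_le_one_right (hR0 a) ((sq_le_one_iff_abs_le_one _).2 (h.abs_le_one a))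
  calc ∑ a, R a * (χ a - μ) ^ 2
        = ∑ a, (R a * χ a ^ 2 - 2 * μ * (R a * χ a) + μ ^ 2 * R a) :=
          sum_congr rfl fun a _ => by ring
    _ = ∑ a, R a * χ a ^ 2 - 2 * μ * μ + μ ^ 2 * ∑ a, R a := by
          rw [sum_add_distrib, sum_sub_distrib, ← mul_sum, ← mul_sum]
    _ ≤ 1 := by nlinarith [sq_nonneg μ]

lemma pos_of_le_mul_pow {B : ℕ} (hB : 128 ≤ B * δ ^ 3) : 0 < (B : ℝ) ∧ 0 < δ := by
  have hBδ : 0 < B * δ ^ 3 := by linarith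
  have hδ : 0 < δ := (Odd.pow_pos_iff (by decide)).1 (pos_of_mul_pos_right hBδ (by positivity))
  exact ⟨pos_of_mul_pos_left hBδ (by positivity), hδ⟩

variable [Nonempty A]

variable (M χ) in
noncomputable def nearestLetter (B : ℕ) (T : ℝ) : A :=
  (exists_min_image univ (fun a => |T - B * rowMean M χ a|) univ_nonempty).choose

lemma abs_sub_nearestLetter_le (B : ℕ) (T : ℝ) (a : A) :
    |T - B * rowMean M χ (nearestLetter M χ B T)| ≤ |T - B * rowMean M χ a| :=
  (exists_min_image univ (fun a => |T - B * rowMean M χ a|) univ_nonempty).choose_spec.2 a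
    (mem_univ a)

lemma rowMean_nearestLetter_eq (h : SeparatingStatistic M χ δ) {B : ℕ} {T : ℝ} {i : A}
    (hT : |T - B * rowMean M χ i| < B * δ / 2) :
    rowMean M χ (nearestLetter M χ B T) = rowMean M χ i := by
  by_contra hne
  have hsep := h.le_abs_rowMean_sub _ _ hne
  have htri := abs_sub_le (B * rowMean M χ (nearestLetter M χ B T)) T (B * rowMean M χ i)
  rw [abs_sub_comm _ T, ← mul_sub, abs_mul, Nat.abs_cast] at htri
  have := abs_sub_nearestLetter_le (M := M) (χ := χ) B T i
  nlinarith [mul_le_mul_of_nonneg_left hsep (Nat.cast_nonneg (α := ℝ) B)]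

/-- Chebyshev's inequality for the sum of `χ` over `B` i.i.d. guesses with law `R`: it stays
within `B * δ / 2` of `B * rowMean M χ i`, where `nearestLetter` recovers the class of `i`. -/
lemma sum_filter_rowMean_nearestLetter_ne_le (h : SeparatingStatistic M χ δ) {B : ℕ}
    (hB : 128 ≤ B * δ ^ 3) {R : A → ℝ} (hR0 : ∀ a, 0 ≤ R a) (hR1 : ∑ a, R a = 1) {i : A}
    (hR : |∑ a, R a * χ a - rowMean M χ i| ≤ δ / 4) :
    ∑ y ∈ univ.filter (fun y : Fin B → A =>
        rowMean M χ (nearestLetter M χ B (∑ m, χ (y m))) ≠ rowMean M χ i),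
      ∏ m, R (y m) ≤ δ / 8 := by
  set μ := ∑ a, R a * χ a
  obtain ⟨hB0, hδ⟩ := pos_of_le_mul_pow hB
  have hfar : ∀ y ∈ univ.filter (fun y : Fin B → A =>
      rowMean M χ (nearestLetter M χ B (∑ m, χ (y m))) ≠ rowMean M χ i),
      B * δ / 4 ≤ |∑ m, (χ (y m) - μ)| := by
    intro y hy
    have hT : B * δ / 2 ≤ |∑ m, χ (y m) - B * rowMean M χ i| :=
      not_lt.1 fun hlt => (mem_filter.1 hy).2 (rowMean_nearestLetter_eq h hlt)
    have hshift : ∑ m, (χ (y m) - μ) =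
        (∑ m, χ (y m) - B * rowMean M χ i) - B * (μ - rowMean M χ i) := by
      simp only [sum_sub_distrib, sum_const, card_univ, Fintype.card_fin, nsmul_eq_mul]
      ring
    have hmean : |B * (μ - rowMean M χ i)| ≤ B * (δ / 4) := by
      rw [abs_mul, Nat.abs_cast]
      exact mul_le_mul_of_nonneg_left hR hB0.le
    rw [hshift]
    linarith [abs_sub_abs_le_abs_sub (∑ m, χ (y m) - B * rowMean M χ i) (B * (μ - rowMean M χ i))]
  have hcentered : ∑ a, R a * (χ a - μ) = 0 := by
    simp only [mul_sub, sum_sub_distrib, ← sum_mul, hR1, one_mul, μ, sub_self]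
  have hvar := sum_prod_mul_sum_sq (ι := Fin B) hR1 hcentered
  rw [Fintype.card_fin] at hvar
  refine (sum_le_sum_mul_sq_div (fun y => prod_nonneg fun m _ => hR0 (y m)) _
    (by positivity) hfar).trans ?_
  rw [hvar, div_le_iff₀ (by positivity)]
  nlinarith [sum_mul_sub_sq_le_one h hR0 hR1]

noncomputable def recEstimate (M : A → A → ℝ) (χ : A → ℝ) (B : ℕ) :
    (n : ℕ) → ((Fin n → Fin B) → A) → A
  | 0 => fun σ => σ Fin.elim0
  | n + 1 => fun τ =>
      nearestLetter M χ B (∑ m, χ (recEstimate M χ B n fun w => τ (Fin.cons m w)))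

variable [DecidableEq A]

variable (M χ) in
noncomputable def estimateLaw (B n : ℕ) (i a : A) : ℝ :=
  ∑ σ ∈ univ.filter (fun σ => recEstimate M χ B n σ = a), levelDist M B i n σ

lemma estimateLaw_nonneg (h : SeparatingStatistic M χ δ) (B n : ℕ) (i a : A) :
    0 ≤ estimateLaw M χ B n i a :=
  sum_nonneg fun σ _ => levelDist_nonneg h.nonneg i n σ

lemma sum_estimateLaw (h : SeparatingStatistic M χ δ) (B n : ℕ) (i : A) :
    ∑ a, estimateLaw M χ B n i a = 1 := by
  simp only [estimateLaw]
  rw [sum_fiberwise, sum_levelDist h.sum_eq_one]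

lemma sum_filter_estimateLaw (B n : ℕ) (i : A) (P : A → Prop) [DecidablePred P] :
    ∑ a ∈ univ.filter P, estimateLaw M χ B n i a =
      ∑ σ ∈ univ.filter (fun σ => P (recEstimate M χ B n σ)), levelDist M B i n σ :=
  sum_filter_sum_fiber _ _ P

/-- The children's guesses are i.i.d., each distributed as the guess at the root of a subtree
whose root letter is drawn from the row `M i`. -/
lemma estimateLaw_succ (B n : ℕ) (i a : A) :
    estimateLaw M χ B (n + 1) i a =
      ∑ y ∈ univ.filter (fun y : Fin B → A => nearestLetter M χ B (∑ m, χ (y m)) = a),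
        ∏ m, ∑ c, M i c * estimateLaw M χ B n c (y m) := by
  rw [estimateLaw, sum_filter, sum_configs_succ]
  simp only [levelDist_succ_eq_prod, recEstimate.eq_2, Fin.cons_zero, Fin.tail_cons]
  eta_reduce
  have hfiber := sum_filter_sum_fiber
    (fun (g : Fin B → (Fin n → Fin B) → A) m => recEstimate M χ B n (g m))
    (fun g => ∏ m, ∑ c, M i c * levelDist M B c n (g m))
    (fun y => nearestLetter M χ B (∑ m, χ (y m)) = a)
  rw [← sum_filter, ← hfiber]
  refine sum_congr rfl fun y _ => ?_
  rw [← prod_sum_fiber (fun ρ => ∑ c, M i c * levelDist M B c n ρ) (recEstimate M χ B n) y]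
  refine prod_congr rfl fun m _ => ?_
  rw [sum_comm]
  simp_rw [estimateLaw, mul_sum]

lemma sum_filter_estimateLaw_ne_le (h : SeparatingStatistic M χ δ) {B : ℕ}
    (hB : 128 ≤ B * δ ^ 3) (n : ℕ) (i : A) :
    ∑ a ∈ univ.filter (fun a => rowMean M χ a ≠ rowMean M χ i), estimateLaw M χ B n i a ≤
      δ / 8 := by
  induction n generalizing i with
  | zero =>
    have hδ := (pos_of_le_mul_pow hB).2
    rw [sum_filter_estimateLaw]
    refine (sum_eq_zero fun σ hσ => if_neg ?_).trans_le (by positivity)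
    rintro rfl
    exact (mem_filter.1 hσ).2 rfl
  | succ n ih =>
    set R := fun a => ∑ c, M i c * estimateLaw M χ B n c a
    have hR0 : ∀ a, 0 ≤ R a := fun a =>
      sum_nonneg fun c _ => mul_nonneg (h.nonneg i c) (estimateLaw_nonneg h B n c a)
    have hR1 : ∑ a, R a = 1 := by
      simp only [R]
      rw [sum_comm]
      simp_rw [← mul_sum, sum_estimateLaw h, mul_one]
      exact h.sum_eq_one i
    have hR : |∑ a, R a * χ a - rowMean M χ i| ≤ δ / 4 := by
      have hsplit : ∑ a, R a * χ a - rowMean M χ i =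
          ∑ c, M i c * (∑ a, estimateLaw M χ B n c a * χ a - χ c) := by
        simp only [R, rowMean, sum_mul, mul_sub, sum_sub_distrib, mul_sum, mul_assoc]
        rw [sum_comm]
      rw [hsplit]
      calc |∑ c, M i c * (∑ a, estimateLaw M χ B n c a * χ a - χ c)|
          ≤ ∑ c, M i c * (2 * (δ / 8)) := by
            refine (abs_sum_le_sum_abs _ _).trans (sum_le_sum fun c _ => ?_)
            rw [abs_mul, abs_of_nonneg (h.nonneg i c)]
            refine mul_le_mul_of_nonneg_left ?_ (h.nonneg i c)
            have hc := abs_sum_mul_sub_le h (estimateLaw_nonneg h B n c) (sum_estimateLaw h B n c) c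
            linarith [ih c]
        _ = δ / 4 := by rw [← sum_mul, h.sum_eq_one]; ring
    simp_rw [estimateLaw_succ]
    rw [sum_filter_sum_fiber (fun y : Fin B → A => nearestLetter M χ B (∑ m, χ (y m)))]
    exact sum_filter_rowMean_nearestLetter_ne_le h hB hR0 hR1 hR

lemma one_sub_le_tvDist (h : SeparatingStatistic M χ δ) {B : ℕ} (hB : 128 ≤ B * δ ^ 3)
    {i j : A} (hij : rowMean M χ i ≠ rowMean M χ j) (n : ℕ) :
    1 - δ / 4 ≤ tvDist (levelDist M B i n) (levelDist M B j n) := by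
  set E := univ.filter fun σ => rowMean M χ (recEstimate M χ B n σ) = rowMean M χ i
  have hi : 1 - δ / 8 ≤ ∑ σ ∈ E, levelDist M B i n σ := by
    have hsplit := sum_filter_add_sum_filter_not univ
      (fun σ => rowMean M χ (recEstimate M χ B n σ) = rowMean M χ i) (levelDist M B i n)
    have herr := sum_filter_estimateLaw_ne_le h hB n i
    rw [sum_levelDist h.sum_eq_one] at hsplit
    rw [sum_filter_estimateLaw] at herr
    linarith
  have hj : ∑ σ ∈ E, levelDist M B j n σ ≤ δ / 8 := by
    have herr := sum_filter_estimateLaw_ne_le h hB n j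
    rw [sum_filter_estimateLaw] at herr
    refine le_trans (sum_le_sum_of_subset_of_nonneg (monotone_filter_right _ fun σ _ hσ => ?_)
      fun σ _ _ => levelDist_nonneg h.nonneg j n σ) herr
    exact hσ ▸ hij
  have := sum_sub_sum_le_tvDist ((sum_levelDist h.sum_eq_one i n).trans
    (sum_levelDist h.sum_eq_one j n).symm) E
  linarith

end Reconstruction

theorem SeparatingStatistic.exists_tendsto_tvDist {A : Type} [Fintype A] [DecidableEq A]
    {M : A → A → ℝ} {χ : A → ℝ} {δ : ℝ} (h : SeparatingStatistic M χ δ) {B : ℕ}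
    (hB : 128 ≤ B * δ ^ 3) {i j : A} (hij : rowMean M χ i ≠ rowMean M χ j) :
    ∃ L > 0, Tendsto (fun n => tvDist (levelDist M B i n) (levelDist M B j n)) atTop (nhds L) := by
  have : Nonempty A := ⟨i⟩
  have hδ : δ < 4 := by
    have := h.le_abs_rowMean_sub i j hij
    have := abs_sub (rowMean M χ i) (rowMean M χ j)
    linarith [abs_rowMean_le_one h i, abs_rowMean_le_one h j]
  have hanti : Antitone fun n => tvDist (levelDist M B i n) (levelDist M B j n) :=
    antitone_nat_of_succ_le (tvDist_levelDist_succ_le h.nonneg h.sum_eq_one B i j)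
  refine ⟨_, ?_, tendsto_atTop_ciInf hanti ⟨0, ?_⟩⟩
  · exact (by linarith : (0 : ℝ) < 1 - δ / 4).trans_le (le_ciInf (one_sub_le_tvDist h hB hij))
  · rintro _ ⟨n, rfl⟩
    exact tvDist_nonneg _ _

section ParityChannel

variable {N : ℕ}

/-- Up to sign, the left side is the `N`-th forward difference of `p` at `0`. -/
lemma sum_neg_one_pow_card_mul_eval (p : ℝ[X]) (hp : p.natDegree < N) :
    ∑ s : Finset (Fin N), (-1) ^ #s * p.eval (#s : ℝ) = 0 := by
  have hdiff := congrFun (fwdDiff_iter_eq_zero_of_degree_lt hp) 0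
  rw [fwdDiff_iter_eq_sum_shift, Pi.zero_apply] at hdiff
  rw [← powerset_univ, sum_powerset_apply_card fun k => (-1) ^ k * p.eval (k : ℝ), card_univ,
    Fintype.card_fin, ← mul_eq_zero_of_right ((-1) ^ N) hdiff, mul_sum]
  refine sum_congr rfl fun k hk => ?_
  have hsign : (-1 : ℝ) ^ k = (-1) ^ N * (-1) ^ (N - k) := by
    have := mem_range.1 hk
    rw [← pow_add, show N + (N - k) = k + 2 * (N - k) by omega, pow_add, pow_mul]
    norm_num
  simp [hsign, zsmul_eq_mul, nsmul_eq_mul]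
  ring

def parity (t : Finset (Fin N)) : ℝ := (-1) ^ #t

variable (N) in
noncomputable def parityBias (s : Finset (Fin N)) : ℝ := 1 / 2 - #s / N

variable (N) in
noncomputable def parityChannel (s t : Finset (Fin N)) : ℝ :=
  (1 + parityBias N s * parity t) / 2 ^ N

lemma abs_parity (t : Finset (Fin N)) : |parity t| = 1 := by simp [parity]

lemma abs_parityBias_le (s : Finset (Fin N)) : |parityBias N s| ≤ 1 / 2 := by
  have hs : (#s : ℝ) ≤ N := by exact_mod_cast (card_le_univ s).trans_eq (Fintype.card_fin N)
  rw [parityBias, abs_le]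
  rcases (Nat.cast_nonneg (α := ℝ) N).eq_or_lt with hN | hN
  · simp [← hN]
  · have : (#s : ℝ) / N ≤ 1 := (div_le_one hN).2 hs
    constructor <;> linarith [div_nonneg (Nat.cast_nonneg (α := ℝ) #s) hN.le]

lemma parityChannel_nonneg (s t : Finset (Fin N)) : 0 ≤ parityChannel N s t := by
  have := abs_le.1 (abs_parityBias_le s)
  rcases abs_eq (zero_le_one' ℝ) |>.1 (abs_parity t) with ht | ht <;>
    exact div_nonneg (by rw [ht]; linarith) (by positivity)

lemma sum_parity (hN : 0 < N) : ∑ t : Finset (Fin N), parity t = 0 := by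
  simpa [parity] using sum_neg_one_pow_card_mul_eval (N := N) 1 (by simpa using hN)

lemma sum_parityChannel (hN : 0 < N) (s : Finset (Fin N)) : ∑ t, parityChannel N s t = 1 := by
  simp [parityChannel, ← sum_div, sum_add_distrib, ← mul_sum, sum_parity hN]

lemma rowMean_parityChannel (hN : 0 < N) (s : Finset (Fin N)) :
    rowMean (parityChannel N) parity s = parityBias N s := by
  have hsq : ∀ t : Finset (Fin N), parity t * parity t = 1 := fun t => by
    simp [parity, ← pow_add, ← two_mul, pow_mul]
  simp only [rowMean, parityChannel, div_mul_eq_mul_div, add_mul, one_mul, mul_assoc, hsq,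
    mul_one, ← sum_div, sum_add_distrib, sum_parity hN]
  simp

/-- The product is a polynomial of degree `< N` in `#t`. -/
lemma sum_parity_mul_prod_parityChannel {W : Type*} (s : Finset W) (x : W → Finset (Fin N))
    (hs : #s < N) : ∑ t, parity t * ∏ w ∈ s, parityChannel N t (x w) = 0 := by
  set q : ℝ[X] := ∏ w ∈ s,
    (C (-parity (x w) / (N * 2 ^ N)) * X + C ((1 + parity (x w) / 2) / 2 ^ N))
  have hq : q.natDegree < N := (natDegree_prod_le _ _).trans_lt <|
    (sum_le_card_nsmul _ _ 1 fun _ _ => natDegree_linear_le).trans_lt (by simpa using hs)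
  have hN : (N : ℝ) ≠ 0 := by exact_mod_cast (Nat.zero_le _).trans_lt hs |>.ne'
  have heval : ∀ t : Finset (Fin N), ∏ w ∈ s, parityChannel N t (x w) = q.eval (#t : ℝ) := by
    intro t
    simp only [q, eval_prod, eval_add, eval_mul, eval_C, eval_X]
    refine prod_congr rfl fun w _ => ?_
    rw [parityChannel, parityBias]
    field_simp
    ring
  simp_rw [heval]
  exact sum_neg_one_pow_card_mul_eval q hq

lemma separatingStatistic_parity (hN : 0 < N) :
    SeparatingStatistic (parityChannel N) parity (1 / N) where
  nonneg := parityChannel_nonneg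
  sum_eq_one := sum_parityChannel hN
  abs_le_one t := (abs_parity t).le
  eq_of_rowMean_eq s s' h := by
    have hN' : (N : ℝ) ≠ 0 := by positivity
    rw [rowMean_parityChannel hN, rowMean_parityChannel hN, parityBias, parityBias,
      sub_right_inj, div_left_inj' hN', Nat.cast_inj] at h
    rw [parity, parity, h]
  le_abs_rowMean_sub s s' h := by
    rw [rowMean_parityChannel hN, rowMean_parityChannel hN] at h ⊢
    have hcard : (#s' : ℤ) - #s ≠ 0 :=
      sub_ne_zero.2 fun hc => h (by rw [parityBias, parityBias, Nat.cast_inj.1 hc])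
    rw [parityBias, parityBias, show 1 / 2 - #s / N - (1 / 2 - #s' / N) = ((#s' : ℝ) - #s) / N by
      ring, abs_div, Nat.abs_cast]
    gcongr
    exact_mod_cast Int.one_le_abs hcard

lemma sum_parityChannel_sub_mul_levelDist_one {b : ℕ} (hb : b < N) (s s' : Finset (Fin N))
    (ρ : (Fin 1 → Fin b) → Finset (Fin N)) :
    ∑ t, (parityChannel N s t - parityChannel N s' t) * levelDist (parityChannel N) b t 1 ρ =
      0 := by
  have hdiff : ∀ t, parityChannel N s t - parityChannel N s' t =
      (parityBias N s - parityBias N s') / 2 ^ N * parity t := fun t => by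
    simp only [parityChannel]
    ring
  simp_rw [hdiff, levelDist_one, mul_assoc, ← mul_sum]
  rw [sum_parity_mul_prod_parityChannel univ ρ (by simpa using hb), mul_zero]

lemma levelDist_parityChannel_two_eq {b : ℕ} (hb : b < N) (s s' : Finset (Fin N))
    (σ : (Fin 2 → Fin b) → Finset (Fin N)) :
    levelDist (parityChannel N) b s 2 σ = levelDist (parityChannel N) b s' 2 σ :=
  levelDist_two_eq_of_sum_sub_mul_levelDist_one (sum_parityChannel_sub_mul_levelDist_one hb) s s' σ

lemma exists_tendsto_tvDist_parityChannel (hN : 0 < N) :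
    ∃ L > 0, Tendsto (fun n => tvDist (levelDist (parityChannel N) (128 * N ^ 3) ∅ n)
      (levelDist (parityChannel N) (128 * N ^ 3) univ n)) atTop (nhds L) := by
  refine (separatingStatistic_parity hN).exists_tendsto_tvDist ?_ ?_
  · rw [Nat.cast_mul, Nat.cast_pow, div_pow, one_pow, mul_assoc,
      mul_one_div_cancel (by positivity), mul_one]
    norm_num
  · rw [rowMean_parityChannel hN, rowMean_parityChannel hN, parityBias, parityBias, card_empty,
      card_univ, Fintype.card_fin, div_self (by positivity)]
    norm_num

end ParityChannel

theorem exists_channel_two_level_independent_yet_solvable_general (b : ℕ) :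
    ∃ (k : ℕ) (M : Fin k → Fin k → ℝ),
      (∀ i j, 0 ≤ M i j) ∧ (∀ i, ∑ j, M i j = 1) ∧
      -- (1) for every initial distribution `π` on the root, the root value and
      -- the configuration at the `b²` leaves of the 2-level `b`-ary tree are
      -- independent: `P[σ_ρ = i, σ_∂ = σ] = P[σ_ρ = i] ⬝ P[σ_∂ = σ]`.
      (∀ π : Fin k → ℝ, (∀ i, 0 ≤ π i) → ∑ i, π i = 1 →
        ∀ (i : Fin k) (σ : (Fin 2 → Fin b) → Fin k),
          π i * levelDist M b i 2 σ = π i * ∑ j, π j * levelDist M b j 2 σ) ∧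
      -- (2) for some `B`, the reconstruction problem for `T_B` and `M` is solvable.
      (∃ B : ℕ, ∃ i j : Fin k, ∃ L > 0, Tendsto
        (fun n => tvDist (levelDist M B i n) (levelDist M B j n)) atTop (nhds L)) := by
  let e := Fintype.equivFin (Finset (Fin (b + 1)))
  refine ⟨_, fun i j => parityChannel (b + 1) (e.symm i) (e.symm j),
    fun _ _ => parityChannel_nonneg _ _,
    fun i => (e.symm.sum_comp _).trans (sum_parityChannel b.succ_pos _), fun π _ hπ i σ => ?_,
    128 * (b + 1) ^ 3, e ∅, e univ, ?_⟩
  · have hindep : ∀ j,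
        levelDist (fun x y => parityChannel (b + 1) (e.symm x) (e.symm y)) b j 2 σ =
          levelDist (fun x y => parityChannel (b + 1) (e.symm x) (e.symm y)) b i 2 σ := fun j => by
      rw [levelDist_relabel, levelDist_relabel, levelDist_parityChannel_two_eq b.lt_succ_self]
    rw [sum_congr rfl fun j _ => by rw [hindep j], ← sum_mul, hπ, one_mul]
  · simpa only [tvDist_levelDist_relabel, Equiv.symm_apply_apply] using
      exists_tendsto_tvDist_parityChannel b.succ_pos

/-- For every `b > 1` there is a channel `M` on a finite alphabet such that the
root variable and the configuration at the leaves of the 2-level `b`-ary tree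
are independent for every initial distribution, yet for sufficiently large `B`
the reconstruction problem for the infinite `B`-ary tree and `M` is solvable. -/
theorem exists_channel_two_level_independent_yet_solvable (b : ℕ) (hb : 1 < b) :
    ∃ (k : ℕ) (M : Fin k → Fin k → ℝ),
      (∀ i j, 0 ≤ M i j) ∧ (∀ i, ∑ j, M i j = 1) ∧
      -- (1) for every initial distribution `π` on the root, the root value and
      -- the configuration at the `b²` leaves of the 2-level `b`-ary tree are
      -- independent: `P[σ_ρ = i, σ_∂ = σ] = P[σ_ρ = i] ⬝ P[σ_∂ = σ]`.
      (∀ π : Fin k → ℝ, (∀ i, 0 ≤ π i) → ∑ i, π i = 1 →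
        ∀ (i : Fin k) (σ : (Fin 2 → Fin b) → Fin k),
          π i * levelDist M b i 2 σ = π i * ∑ j, π j * levelDist M b j 2 σ) ∧
      -- (2) for some `B`, the reconstruction problem for `T_B` and `M` is solvable.
      (∃ B : ℕ, ∃ i j : Fin k, ∃ L > 0, Tendsto
        (fun n => tvDist (levelDist M B i n) (levelDist M B j n)) atTop (nhds L)) :=
  exists_channel_two_level_independent_yet_solvable_general b
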